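/- arXiv:2008.03784 — 4 statements merged into one kernel-verified Lean document; each statement's English description precedes it below -/
import Mathlib

section
/- Let m_l ≤ M_l and m_r ≤ M_r be integers with [m_l - M_r, M_l - m_r] ∩ [2,4] ≠ ∅. Then the set of integers k such that there exist σ_l ∈ [m_l,M_l], σ_r ∈ [m_r,M_r] and a,b,c,d ∈ {0,1} with a+c ≥ 1, b+d ≥ 1, σ_l - σ_r = a+b+c+d, and k = σ_l - a - b (equivalently k = σ_r + c + d) is exactly the integer interval [max{m_l-2, m_r}, min{M_l, M_r+2}]. -/
theorem stmt_4 (ml Ml mr Mr : ℤ) (h1 : ml ≤ Ml) (h2 : mr ≤ Mr)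
    (hcond : (Set.Icc (ml - Mr) (Ml - mr) ∩ Set.Icc 2 4).Nonempty) :
    {k : ℤ | ∃ σl σr a b c d : ℤ,
        σl ∈ Set.Icc ml Ml ∧ σr ∈ Set.Icc mr Mr ∧
        a ∈ ({0, 1} : Set ℤ) ∧ b ∈ ({0, 1} : Set ℤ) ∧
        c ∈ ({0, 1} : Set ℤ) ∧ d ∈ ({0, 1} : Set ℤ) ∧
        1 ≤ a + c ∧ 1 ≤ b + d ∧
        σl - σr = a + b + c + d ∧ k = σl - a - b}
      = Set.Icc (max (ml - 2) mr) (min Ml (Mr + 2)) := by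
  obtain ⟨x, ⟨hx1, hx2⟩, hx3, hx4⟩ := hcond
  have hMm : 2 ≤ Ml - mr := le_trans hx3 hx2
  ext k
  simp only [Set.mem_setOf_eq, Set.mem_Icc, Set.mem_insert_iff, Set.mem_singleton_iff]
  constructor
  · rintro ⟨σl, σr, a, b, c, d, ⟨h3, h4⟩, ⟨h5, h6⟩, ha, hb, hc, hd, hac, hbd, heq, hk⟩
    omega
  · rintro ⟨hk1, hk2⟩
    refine ⟨k + min 2 (Ml - k), k - max (max 0 (k - Mr)) (2 - min 2 (Ml - k)),
      min (min 2 (Ml - k)) 1, min 2 (Ml - k) - min (min 2 (Ml - k)) 1,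
      max (max 0 (k - Mr)) (2 - min 2 (Ml - k)) -
        min (max (max 0 (k - Mr)) (2 - min 2 (Ml - k))) 1,
      min (max (max 0 (k - Mr)) (2 - min 2 (Ml - k))) 1,
      ?_, ?_, ?_, ?_, ?_, ?_, ?_, ?_, ?_, ?_⟩ <;> omega
end

section
/- Let m_l ≤ M_l and m_r ≤ M_r be integers with [m_l - M_r, M_l - m_r] ∩ [2,3] ≠ ∅. Then the set of half-odd-integers k (k = j + 1/2 for integer j) such that there exist σ_l ∈ [m_l,M_l], σ_r ∈ [m_r,M_r] and a,c ∈ {0,1} with a+c ≥ 1, σ_l - σ_r = a + c + 1, and k = σ_l - a - 1/2 (equivalently k = σ_r + c + 1/2) is exactly the set of half-odd-integers in [max{m_l-2, m_r} + 1/2, min{M_l, M_r+2} - 1/2]. -/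
theorem stmt_6 (ml Ml mr Mr : ℤ) (h1 : ml ≤ Ml) (h2 : mr ≤ Mr)
    (hcond : (Set.Icc (ml - Mr) (Ml - mr) ∩ Set.Icc 2 3).Nonempty) :
    {k : ℚ | (∃ j : ℤ, k = (j : ℚ) + 1/2) ∧
        ∃ σl σr a c : ℤ, σl ∈ Set.Icc ml Ml ∧ σr ∈ Set.Icc mr Mr ∧
          a ∈ ({0, 1} : Set ℤ) ∧ c ∈ ({0, 1} : Set ℤ) ∧ 1 ≤ a + c ∧
          σl - σr = a + c + 1 ∧
          k = (σl : ℚ) - a - 1/2 ∧ k = (σr : ℚ) + c + 1/2}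
      = {k : ℚ | (∃ j : ℤ, k = (j : ℚ) + 1/2) ∧
          ((max (ml - 2) mr : ℤ) : ℚ) + 1/2 ≤ k ∧ k ≤ ((min Ml (Mr + 2) : ℤ) : ℚ) - 1/2} := by
  obtain ⟨t, ⟨ht1, ht2⟩, ht3, ht4⟩ := hcond
  have hA : ml ≤ Mr + 3 := by linarith
  have hB : mr + 2 ≤ Ml := by linarith
  ext k
  simp only [Set.mem_setOf_eq, Set.mem_Icc, Set.mem_insert_iff, Set.mem_singleton_iff]
  constructor
  · rintro ⟨⟨j, hj⟩, σl, σr, a, c, ⟨hσl1, hσl2⟩, ⟨hσr1, hσr2⟩, ha, hc, hac, heq, hk1, hk2⟩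
    refine ⟨⟨j, hj⟩, ?_, ?_⟩
    · have hja : (j : ℚ) = (σr : ℚ) + c := by rw [hj] at hk2; linarith
      have hj' : j = σr + c := by exact_mod_cast (by push_cast; linarith : (j : ℚ) = ((σr + c : ℤ) : ℚ))
      have ha0 : 0 ≤ a := by rcases ha with h | h <;> omega
      have hc1 : c ≤ 1 := by rcases hc with h | h <;> omega
      have hc0 : 0 ≤ c := by rcases hc with h | h <;> omega
      have ha1 : a ≤ 1 := by rcases ha with h | h <;> omega
      have : max (ml - 2) mr ≤ j := by
        apply max_le <;> omega
      rw [hj]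
      push_cast
      have : ((max (ml - 2) mr : ℤ) : ℚ) ≤ (j : ℚ) := by exact_mod_cast this
      push_cast at this
      linarith
    · have hj' : j = σr + c := by
        have : (j : ℚ) = ((σr + c : ℤ) : ℚ) := by rw [hj] at hk2; push_cast; linarith
        exact_mod_cast this
      have ha0 : 0 ≤ a := by rcases ha with h | h <;> omega
      have hc1 : c ≤ 1 := by rcases hc with h | h <;> omega
      have hc0 : 0 ≤ c := by rcases hc with h | h <;> omega
      have ha1 : a ≤ 1 := by rcases ha with h | h <;> omega
      have hmin : j + 1 ≤ min Ml (Mr + 2) := by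
        apply le_min <;> omega
      rw [hj]
      have : ((j + 1 : ℤ) : ℚ) ≤ ((min Ml (Mr + 2) : ℤ) : ℚ) := by exact_mod_cast hmin
      push_cast at this ⊢
      linarith
  · rintro ⟨⟨j, hj⟩, hlo, hhi⟩
    refine ⟨⟨j, hj⟩, ?_⟩
    rw [hj] at hlo hhi
    have hlo' : max (ml - 2) mr ≤ j := by
      have : ((max (ml - 2) mr : ℤ) : ℚ) ≤ (j : ℚ) := by linarith
      exact_mod_cast this
    have hhi' : j + 1 ≤ min Ml (Mr + 2) := by
      have : ((j + 1 : ℤ) : ℚ) ≤ ((min Ml (Mr + 2) : ℤ) : ℚ) := by push_cast at hhi ⊢; linarith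
      exact_mod_cast this
    have hj1 : ml - 2 ≤ j := le_trans (le_max_left _ _) hlo'
    have hj2 : mr ≤ j := le_trans (le_max_right _ _) hlo'
    have hj3 : j + 1 ≤ Ml := le_trans hhi' (min_le_left _ _)
    have hj4 : j + 1 ≤ Mr + 2 := le_trans hhi' (min_le_right _ _)
    -- choose a, c
    by_cases hcase : j ≤ Ml - 2
    · by_cases hcase2 : j ≤ Mr
      · exact ⟨j + 2, j, 1, 0, ⟨by omega, by omega⟩, ⟨by omega, by omega⟩, Or.inr rfl,
          Or.inl rfl, by omega, by omega, by rw [hj]; push_cast; ring, by rw [hj]; push_cast; ring⟩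
      · exact ⟨j + 2, j - 1, 1, 1, ⟨by omega, by omega⟩, ⟨by omega, by omega⟩, Or.inr rfl,
          Or.inr rfl, by omega, by omega, by rw [hj]; push_cast; ring, by rw [hj]; push_cast; ring⟩
    · exact ⟨j + 1, j - 1, 0, 1, ⟨by omega, by omega⟩, ⟨by omega, by omega⟩, Or.inl rfl,
        Or.inr rfl, by omega, by omega, by rw [hj]; push_cast; ring, by rw [hj]; push_cast; ring⟩
end

section
/- Let m_l, M_l be half-odd-integers with m_l ≤ M_l and let m_r, M_r be integers with m_r ≤ M_r, such that [m_l - M_r, M_l - m_r] ∩ [5/2, 7/2] ≠ ∅. Then the set of integers k such that there exist σ_l ∈ [m_l,M_l] (half-odd-integer), σ_r ∈ [m_r,M_r] (integer) and a,c ∈ {0,1} with a+c ≥ 1, σ_l - σ_r = a + c + 3/2, and k = σ_l - a - 1/2 (equivalently k = σ_r + c + 1) is exactly the set of integers in [max{m_l - 3/2, m_r + 1}, min{M_l - 1/2, M_r + 2}]. -/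
theorem stmt_7 (ml Ml : ℚ) (mr Mr : ℤ)
    (hml : ∃ j : ℤ, ml = (j : ℚ) + 1/2) (hMl : ∃ j : ℤ, Ml = (j : ℚ) + 1/2)
    (h1 : ml ≤ Ml) (h2 : mr ≤ Mr)
    (hcond : (Set.Icc (ml - Mr) (Ml - mr) ∩ Set.Icc (5/2 : ℚ) (7/2)).Nonempty) :
    {k : ℤ | ∃ (σl : ℚ) (σr a c : ℤ), (∃ j : ℤ, σl = (j : ℚ) + 1/2) ∧
        ml ≤ σl ∧ σl ≤ Ml ∧ σr ∈ Set.Icc mr Mr ∧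
        a ∈ ({0, 1} : Set ℤ) ∧ c ∈ ({0, 1} : Set ℤ) ∧ 1 ≤ a + c ∧
        σl - σr = (a : ℚ) + c + 3/2 ∧
        (k : ℚ) = σl - a - 1/2 ∧ (k : ℚ) = (σr : ℚ) + c + 1}
      = {k : ℤ | max (ml - 3/2) ((mr : ℚ) + 1) ≤ (k : ℚ) ∧
          (k : ℚ) ≤ min (Ml - 1/2) ((Mr : ℚ) + 2)} := by
  obtain ⟨x, ⟨hx1, hx2⟩, hx3, hx4⟩ := hcond
  have hMm : (5/2 : ℚ) ≤ Ml - mr := le_trans hx3 hx2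
  obtain ⟨jm, hjm⟩ := hml
  obtain ⟨jM, hjM⟩ := hMl
  ext k
  simp only [Set.mem_setOf_eq, Set.mem_Icc, Set.mem_insert_iff, Set.mem_singleton_iff,
    max_le_iff, le_min_iff]
  constructor
  · rintro ⟨σl, σr, a, c, ⟨j, hj⟩, h3, h4, ⟨h5, h6⟩, ha, hc, hac, heq, hk1, hk2⟩
    have h5' : (mr : ℚ) ≤ σr := by exact_mod_cast h5
    have h6' : (σr : ℚ) ≤ Mr := by exact_mod_cast h6
    have ha' : (0 : ℚ) ≤ a ∧ (a : ℚ) ≤ 1 := by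
      rcases ha with rfl | rfl <;> norm_num
    have hc' : (0 : ℚ) ≤ c ∧ (c : ℚ) ≤ 1 := by
      rcases hc with rfl | rfl <;> norm_num
    exact ⟨⟨by linarith [ha'.1, ha'.2], by linarith [hc'.1]⟩,
      ⟨by linarith [ha'.1], by linarith [hc'.2]⟩⟩
  · rintro ⟨⟨hA, hB⟩, hC, hD⟩
    by_cases hA' : (k : ℚ) ≤ Ml - 3/2
    · by_cases hB' : (mr : ℚ) + 2 ≤ k
      · -- a = 1, c = 1
        refine ⟨(k : ℚ) + 1 + 1/2, k - 2, 1, 1, ⟨k + 1, by push_cast; ring⟩,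
          by linarith, by linarith, ⟨?_, ?_⟩, Or.inr rfl, Or.inr rfl, by norm_num,
          by push_cast; ring, by push_cast; ring, by push_cast; ring⟩
        · have : (mr : ℚ) ≤ (k : ℚ) - 2 := by linarith
          exact_mod_cast this
        · have : ((k : ℚ)) - 2 ≤ (Mr : ℚ) := by linarith
          exact_mod_cast this
      · -- a = 1, c = 0; k ≤ mr + 1
        have hk : (k : ℚ) ≤ (mr : ℚ) + 1 := by
          have : k < mr + 2 := by exact_mod_cast (not_le.mp hB')
          have : k ≤ mr + 1 := by omega
          exact_mod_cast this
        refine ⟨(k : ℚ) + 1 + 1/2, k - 1, 1, 0, ⟨k + 1, by push_cast; ring⟩,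
          by linarith, by linarith, ⟨?_, ?_⟩, Or.inr rfl, Or.inl rfl, by norm_num,
          by push_cast; ring, by push_cast; ring, by push_cast; ring⟩
        · have : (mr : ℚ) ≤ (k : ℚ) - 1 := by linarith
          exact_mod_cast this
        · have : ((k : ℚ)) - 1 ≤ (Mr : ℚ) := by
            have : (mr : ℚ) ≤ Mr := by exact_mod_cast h2
            linarith
          exact_mod_cast this
    · -- a = 0, c = 1; k ≥ Ml - 1/2 = jM
      have hk : (jM : ℚ) ≤ k := by
        have h : (jM : ℚ) - 1 < k := by rw [hjM] at hA'; linarith [not_le.mp hA']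
        have : jM - 1 < k := by exact_mod_cast h
        have : jM ≤ k := by omega
        exact_mod_cast this
      have hkl : Ml - 1/2 ≤ (k : ℚ) := by rw [hjM]; linarith
      refine ⟨(k : ℚ) + 1/2, k - 2, 0, 1, ⟨k, by push_cast; ring⟩,
        by linarith, by linarith, ⟨?_, ?_⟩, Or.inl rfl, Or.inr rfl, by norm_num,
        by push_cast; ring, by push_cast; ring, by push_cast; ring⟩
      · have : (mr : ℚ) ≤ (k : ℚ) - 2 := by linarith
        exact_mod_cast this
      · have : ((k : ℚ)) - 2 ≤ (Mr : ℚ) := by linarith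
        exact_mod_cast this
end

section
/- Let a ≤ b and c ≤ d be integers such that [a - d, b - c] ∩ [2,4] ≠ ∅, and let k be an integer with max{a-2, c} ≤ k ≤ min{b, d+2}. Then at least one of the following holds: (i) k + 2 ∈ [a,b] and [k-2,k] ∩ [c,d] ≠ ∅; (ii) k = b - 1 and ([b-3, b-2] ∩ [c,d] ≠ ∅); (iii) k = b and b - 2 ∈ [c,d]. In particular there exist σ_l ∈ [a,b], σ_r ∈ [c,d] with σ_l - σ_r ∈ [2,4], σ_l - k ∈ {0,1,2}, and k - σ_r ∈ {0,1,2} with (σ_l - k) + (k - σ_r) = σ_l - σ_r. -/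
/-!
Put `σ_l = min b (k + 2)` and `σ_r = max c (k - 2)`, the points of `[a, b]` and `[c, d]` closest
to `k + 2` and `k - 2`. The bounds on `k` keep both inside their intervals and within distance `2`
of `k`, and `2 ≤ b - c` gives `σ_l - σ_r ≥ 2`. The three alternatives correspond to
`k + 2 ≤ b`, `k = b - 1` and `k = b`.
-/

open Set

lemma Int.mem_zero_one_two {n : ℤ} (h0 : 0 ≤ n) (h2 : n ≤ 2) : n ∈ ({0, 1, 2} : Set ℤ) := by
  interval_cases n <;> simp

section PoleAngles

variable {a b c d k : ℤ}

theorem pole_angle_cases (hcd : c ≤ d) (hcb : c + 2 ≤ b) (hak : a ≤ k + 2) (hck : c ≤ k)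
    (hkb : k ≤ b) (hkd : k ≤ d + 2) :
    (k + 2 ∈ Icc a b ∧ (Icc (k - 2) k ∩ Icc c d).Nonempty) ∨
      (k = b - 1 ∧ (Icc (b - 3) (b - 2) ∩ Icc c d).Nonempty) ∨
      (k = b ∧ b - 2 ∈ Icc c d) := by
  rcases le_or_gt (k + 2) b with hk | hk
  · refine Or.inl ⟨⟨hak, hk⟩, ?_⟩
    simp only [Icc_inter_Icc, nonempty_Icc, sup_le_iff, le_inf_iff]
    omega
  · obtain rfl | rfl : k = b - 1 ∨ k = b := by omega
    · refine Or.inr (Or.inl ⟨rfl, ?_⟩)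
      simp only [Icc_inter_Icc, nonempty_Icc, sup_le_iff, le_inf_iff]
      omega
    · exact Or.inr (Or.inr ⟨rfl, by omega, by omega⟩)

theorem exists_spirality_split (hab : a ≤ b) (hcd : c ≤ d) (hcb : c + 2 ≤ b) (hak : a ≤ k + 2)
    (hck : c ≤ k) (hkb : k ≤ b) (hkd : k ≤ d + 2) :
    ∃ σl σr : ℤ, σl ∈ Icc a b ∧ σr ∈ Icc c d ∧ 2 ≤ σl - σr ∧ σl - σr ≤ 4 ∧
      σl - k ∈ ({0, 1, 2} : Set ℤ) ∧ k - σr ∈ ({0, 1, 2} : Set ℤ) ∧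
      (σl - k) + (k - σr) = σl - σr := by
  refine ⟨min b (k + 2), max c (k - 2), ⟨by omega, min_le_left _ _⟩, ⟨le_max_left _ _, by omega⟩,
    by omega, by omega, Int.mem_zero_one_two (by omega) (by omega),
    Int.mem_zero_one_two (by omega) (by omega), by ring⟩

end PoleAngles

theorem stmt_15 (a b c d : ℤ) (hab : a ≤ b) (hcd : c ≤ d)
    (hcond : (Set.Icc (a - d) (b - c) ∩ Set.Icc 2 4).Nonempty)
    (k : ℤ) (hk1 : max (a - 2) c ≤ k) (hk2 : k ≤ min b (d + 2)) :
    ((k + 2 ∈ Set.Icc a b ∧ (Set.Icc (k - 2) k ∩ Set.Icc c d).Nonempty) ∨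
      (k = b - 1 ∧ (Set.Icc (b - 3) (b - 2) ∩ Set.Icc c d).Nonempty) ∨
      (k = b ∧ b - 2 ∈ Set.Icc c d)) ∧
    (∃ σl σr : ℤ, σl ∈ Set.Icc a b ∧ σr ∈ Set.Icc c d ∧
      2 ≤ σl - σr ∧ σl - σr ≤ 4 ∧
      σl - k ∈ ({0, 1, 2} : Set ℤ) ∧ k - σr ∈ ({0, 1, 2} : Set ℤ) ∧
      (σl - k) + (k - σr) = σl - σr) := by
  obtain ⟨x, ⟨-, hxbc⟩, hx2, -⟩ := hcond
  have hcb : c + 2 ≤ b := by omega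
  rw [max_le_iff] at hk1
  rw [le_min_iff] at hk2
  have hak : a ≤ k + 2 := by omega
  exact ⟨pole_angle_cases hcd hcb hak hk1.2 hk2.1 hk2.2,
    exists_spirality_split hab hcd hcb hak hk1.2 hk2.1 hk2.2⟩
end
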